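/- arXiv:1101.5696 — 3 statements merged into one kernel-verified Lean document; each statement's English description precedes it below -/
import Mathlib

section
/- For every n ∈ ℤ one has the identity (id − λ⁻¹σ)(x₀)(n) = (λ − 1) ∑_{j=1}^∞ λ^{−j} τ^j(x₀)(n), where the series on the right converges absolutely. -/
/-!
Write `μ = λ⁻¹` and `S(n) = ∑_{j ≥ 1} μ^j τ^j(x₀)(n)`. Since `τ^{j+1}x(2k) = τ^j x(k)` and
`τ^{j+1}x` vanishes at odd integers, `S(2k) = μ (x₀(k) + S(k))` and `S(2k+1) = 0`; on the other
hand `x₀(2k) = x₀(k)` and `x₀(2k+1) = μ x₀(k)`. Hence the defect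
`E(n) = x₀(n) - μ x₀(n-1) - (λ - 1) S(n)` satisfies `E(2k) = μ E(k)` and `E(2k+1) = 0`, and a
strong induction on `|n|` (using `μ ≠ 1` at `n = 0`) shows that `E` vanishes.
-/

open scoped ENNReal
open Filter Topology

noncomputable section

/-- `b(n)` = number of ones in the binary expansion of `n ≥ 0`. -/
def binOnes (n : ℤ) : ℕ := (Nat.digits 2 n.toNat).sum

/-- the element `x₀`: `x₀(n) = λ^{-b(n)}` for `n ≥ 0` and `x₀(n) = 0` for `n < 0`. -/
def x0Fun (lam : ℂ) : ℤ → ℂ := fun n => if 0 ≤ n then lam⁻¹ ^ binOnes n else 0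

/-- the operator `τ` on sequences: `τ(x)(n) = x(n/2)` for even `n`, `0` for odd `n`. -/
def tauFun (x : ℤ → ℂ) : ℤ → ℂ := fun n => if (2 : ℤ) ∣ n then x (n / 2) else 0

theorem Int.eq_zero_of_two_mul_of_two_mul_add_one {K : Type*} [Field K] {f : ℤ → K} {c : K}
    (hc : c ≠ 1) (h_even : ∀ k, f (2 * k) = c * f k) (h_odd : ∀ k, f (2 * k + 1) = 0) (n : ℤ) :
    f n = 0 := by
  induction h : n.natAbs using Nat.strong_induction_on generalizing n with
  | _ N ih =>
    obtain ⟨k, rfl | rfl⟩ := Int.even_or_odd' n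
    · by_cases hk : k = 0
      · subst hk
        have h0 := h_even 0
        rw [mul_zero] at h0 ⊢
        have : (1 - c) * f 0 = 0 := by linear_combination h0
        exact (mul_eq_zero.mp this).resolve_left (sub_ne_zero.mpr hc.symm)
      · rw [h_even, ih k.natAbs (by omega) k rfl, mul_zero]
    · exact h_odd k

namespace Nat

theorem digits_sum_two_mul (m : ℕ) : (digits 2 (2 * m)).sum = (digits 2 m).sum := by
  rcases m.eq_zero_or_pos with rfl | hm
  · rfl
  · simp [digits_base_mul one_lt_two hm]

theorem digits_sum_two_mul_add_one (m : ℕ) :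
    (digits 2 (2 * m + 1)).sum = (digits 2 m).sum + 1 := by
  rw [add_comm, digits_add 2 one_lt_two 1 m one_lt_two (Or.inl one_ne_zero), List.sum_cons,
    add_comm]

end Nat

section x0Fun

variable (lam : ℂ)

theorem x0Fun_natCast (m : ℕ) : x0Fun lam m = lam⁻¹ ^ (Nat.digits 2 m).sum := by
  simp [x0Fun, binOnes]

theorem x0Fun_of_neg {n : ℤ} (hn : n < 0) : x0Fun lam n = 0 :=
  if_neg hn.not_ge

theorem x0Fun_two_mul (k : ℤ) : x0Fun lam (2 * k) = x0Fun lam k := by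
  rcases lt_or_ge k 0 with hk | hk
  · rw [x0Fun_of_neg lam hk, x0Fun_of_neg lam (by omega)]
  · lift k to ℕ using hk
    have := x0Fun_natCast lam (2 * k)
    push_cast at this
    rw [this, x0Fun_natCast, Nat.digits_sum_two_mul]

theorem x0Fun_two_mul_add_one (k : ℤ) : x0Fun lam (2 * k + 1) = lam⁻¹ * x0Fun lam k := by
  rcases lt_or_ge k 0 with hk | hk
  · rw [x0Fun_of_neg lam hk, x0Fun_of_neg lam (by omega), mul_zero]
  · lift k to ℕ using hk
    have := x0Fun_natCast lam (2 * k + 1)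
    push_cast at this
    rw [this, x0Fun_natCast, Nat.digits_sum_two_mul_add_one, pow_succ']

end x0Fun

theorem norm_x0Fun_le_one {lam : ℂ} (h : 1 ≤ ‖lam‖) (n : ℤ) : ‖x0Fun lam n‖ ≤ 1 := by
  unfold x0Fun
  split_ifs
  · rw [norm_pow, norm_inv]
    exact pow_le_one₀ (by positivity) (inv_le_one_of_one_le₀ h)
  · simp

theorem tauFun_two_mul (x : ℤ → ℂ) (k : ℤ) : tauFun x (2 * k) = x k := by
  rw [tauFun, if_pos (dvd_mul_right 2 k), Int.mul_ediv_cancel_left _ two_ne_zero]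

theorem tauFun_two_mul_add_one (x : ℤ → ℂ) (k : ℤ) : tauFun x (2 * k + 1) = 0 :=
  if_neg (by omega)

theorem norm_tauFun_iterate_le {x : ℤ → ℂ} {C : ℝ} (hx : ∀ m, ‖x m‖ ≤ C) (j : ℕ) (n : ℤ) :
    ‖tauFun^[j] x n‖ ≤ C := by
  induction j generalizing n with
  | zero => exact hx n
  | succ j ih =>
    rw [Function.iterate_succ_apply', tauFun]
    split_ifs
    · exact ih _
    · simpa using (norm_nonneg _).trans (hx n)

theorem summable_norm_pow_mul_tauFun_iterate {μ : ℂ} (hμ : ‖μ‖ < 1) {x : ℤ → ℂ} {C : ℝ}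
    (hx : ∀ m, ‖x m‖ ≤ C) (n : ℤ) :
    Summable fun j : ℕ => ‖μ ^ j * tauFun^[j] x n‖ := by
  refine ((summable_geometric_of_lt_one (norm_nonneg μ) hμ).mul_right C).of_nonneg_of_le
    (fun j => norm_nonneg _) fun j => ?_
  rw [norm_mul, norm_pow]
  exact mul_le_mul_of_nonneg_left (norm_tauFun_iterate_le hx j n) (by positivity)

def tauSeries (μ : ℂ) (x : ℤ → ℂ) (n : ℤ) : ℂ :=
  ∑' j : ℕ, μ ^ (j + 1) * tauFun^[j + 1] x n

theorem tauSeries_two_mul {μ : ℂ} (hμ : ‖μ‖ < 1) {x : ℤ → ℂ} {C : ℝ} (hx : ∀ m, ‖x m‖ ≤ C)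
    (k : ℤ) : tauSeries μ x (2 * k) = μ * (x k + tauSeries μ x k) := by
  have hsum := (summable_norm_pow_mul_tauFun_iterate hμ hx k).of_norm
  calc tauSeries μ x (2 * k) = μ * ∑' j : ℕ, μ ^ j * tauFun^[j] x k := by
        rw [tauSeries, ← tsum_mul_left]
        congr! 2 with j
        rw [Function.iterate_succ_apply', tauFun_two_mul, pow_succ']
        ring
    _ = μ * (x k + tauSeries μ x k) := by
        rw [hsum.tsum_eq_zero_add, pow_zero, one_mul, Function.iterate_zero_apply, tauSeries]

theorem tauSeries_two_mul_add_one (μ : ℂ) (x : ℤ → ℂ) (k : ℤ) :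
    tauSeries μ x (2 * k + 1) = 0 := by
  simp [tauSeries, Function.iterate_succ_apply', tauFun_two_mul_add_one]

/-- Statement 3.  For every `n ∈ ℤ`,
`(id − λ⁻¹σ)(x₀)(n) = (λ − 1) ∑_{j=1}^∞ λ^{−j} τ^j(x₀)(n)`, the series converging absolutely
(here the sum over `j ≥ 1` is indexed by `j + 1` for `j : ℕ`). -/
theorem statement_3 (lam : ℂ) (h : 1 < ‖lam‖) (n : ℤ) :
    Summable (fun j : ℕ => ‖lam⁻¹ ^ (j + 1) * (tauFun^[j + 1] (x0Fun lam)) n‖) ∧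
    x0Fun lam n - lam⁻¹ * x0Fun lam (n - 1) =
      (lam - 1) * ∑' j : ℕ, lam⁻¹ ^ (j + 1) * (tauFun^[j + 1] (x0Fun lam)) n := by
  have hμ : ‖lam⁻¹‖ < 1 := by rw [norm_inv]; exact inv_lt_one_of_one_lt₀ h
  have hx := norm_x0Fun_le_one h.le
  have hlam : lam * lam⁻¹ = 1 := mul_inv_cancel₀ (norm_pos_iff.mp (one_pos.trans h))
  refine ⟨(summable_norm_pow_mul_tauFun_iterate hμ hx n).comp_injective (add_left_injective 1),
    ?_⟩
  set E : ℤ → ℂ := fun n => x0Fun lam n - lam⁻¹ * x0Fun lam (n - 1)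
    - (lam - 1) * tauSeries lam⁻¹ (x0Fun lam) n
  have h_even (k : ℤ) : E (2 * k) = lam⁻¹ * E k := by
    have h_pred : 2 * k - 1 = 2 * (k - 1) + 1 := by ring
    simp only [E]
    rw [h_pred, x0Fun_two_mul, x0Fun_two_mul_add_one, tauSeries_two_mul hμ hx]
    linear_combination -x0Fun lam k * hlam
  have h_odd (k : ℤ) : E (2 * k + 1) = 0 := by
    simp only [E, add_sub_cancel_right, x0Fun_two_mul, x0Fun_two_mul_add_one,
      tauSeries_two_mul_add_one]
    ring
  have hμ1 : lam⁻¹ ≠ 1 := fun h1 => by simp [h1] at hμ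
  exact sub_eq_zero.mp (Int.eq_zero_of_two_mul_of_two_mul_add_one hμ1 h_even h_odd n)
end
end

section
/- The canonical map ι_{F^{(λ)}} : ℓ₁(ℤ) → (F^{(λ)})*, given by ⟨ι_{F^{(λ)}}(a), x⟩ = ∑_{n∈ℤ} x(n)a(n), is injective: if a ∈ ℓ₁(ℤ) satisfies ∑_{n∈ℤ} x(n)a(n) = 0 for all x ∈ F^{(λ)}, then a = 0. -/
open scoped ENNReal
open Filter Topology

noncomputable section

/-- `ℓ₁(ℤ)`, the complex Banach space of absolutely summable bilateral sequences. -/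
abbrev ellOne : Type := lp (fun _ : ℤ => ℂ) 1

/-- `ℓ∞(ℤ)`, the complex Banach space of bounded bilateral sequences. -/
abbrev ellInf : Type := lp (fun _ : ℤ => ℂ) ∞

lemma memℓp_zshift (m : ℤ) (x : ellInf) : Memℓp (fun n : ℤ => x (n - m)) ∞ := by
  have hx := memℓp_infty_iff.1 (lp.memℓp x)
  refine memℓp_infty (hx.mono ?_)
  rintro r ⟨n, rfl⟩
  exact ⟨n - m, rfl⟩

/-- translation by `m` on `ℓ∞(ℤ)`: `(zshift m x) n = x (n - m)`.  In particular `zshift 1` is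
the bilateral shift `σ`, with `σ(x)(n) = x (n - 1)`, and `zshift m = σ^m`. -/
def zshift (m : ℤ) (x : ellInf) : ellInf := ⟨fun n => x (n - m), memℓp_zshift m x⟩

lemma x0_mem (lam : ℂ) (h : 1 < ‖lam‖) : Memℓp (x0Fun lam) ∞ := by
  refine memℓp_infty ⟨1, ?_⟩
  rintro r ⟨n, rfl⟩
  simp only [x0Fun]
  split_ifs
  · rw [norm_pow]
    refine pow_le_one₀ (norm_nonneg _) ?_
    rw [norm_inv]
    exact inv_le_one_of_one_le₀ h.le
  · simp

/-- `x₀` as an element of `ℓ∞(ℤ)`. -/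
def x0L (lam : ℂ) (h : 1 < ‖lam‖) : ellInf := ⟨x0Fun lam, x0_mem lam h⟩

/-- `F^{(λ)}`: the closed linear span in `ℓ∞(ℤ)` of the bilateral shifts `σ^m(x₀)`, `m ∈ ℤ`. -/
def Flam (lam : ℂ) (h : 1 < ‖lam‖) : Submodule ℂ ellInf :=
  (Submodule.span ℂ (Set.range fun m : ℤ => zshift m (x0L lam h))).topologicalClosure

/-!
Write `w(k) = μ^{b(k)}` with `μ = λ⁻¹`, so that `x₀(n) = w(n)` on `n ≥ 0`, and pair `a ∈ ℓ₁` against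
`x₀` with stride `d`: `P_d(m) = ∑_{k ≥ 0} w(k) a(m + d k)`; the hypothesis says `P_1 ≡ 0`.
Splitting `k` by parity and using `w(2k) = w(k)`, `w(2k+1) = μ w(k)` gives
`P_d(m) = P_{2d}(m) + μ P_{2d}(m + d)`. So `P_d ≡ 0` forces `P_{2d}(m) = -μ P_{2d}(m + d)`, and as
`P_{2d}` is bounded by `‖a‖₁` while `|μ| < 1`, iterating gives `P_{2d} ≡ 0`. Hence `P_{2^N} ≡ 0`
for all `N`. Since `w(0) = 1`, `|a(m)| = |a(m) - P_{2^N}(m)|` is at most the tail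
`∑_{n ≥ m + 2^N} |a(n)|`, which tends to `0`.
-/

section DyadicWeight

variable {𝕜 : Type*} [NormedField 𝕜]

def dyadicWeight (μ : 𝕜) (k : ℕ) : 𝕜 := μ ^ (Nat.digits 2 k).sum

@[simp]
lemma dyadicWeight_zero (μ : 𝕜) : dyadicWeight μ 0 = 1 := by simp [dyadicWeight]

lemma dyadicWeight_two_mul (μ : 𝕜) (k : ℕ) : dyadicWeight μ (2 * k) = dyadicWeight μ k := by
  rcases k.eq_zero_or_pos with rfl | hk
  · rfl
  · simp [dyadicWeight, Nat.digits_def' one_lt_two (by omega : 0 < 2 * k)]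

lemma dyadicWeight_two_mul_add_one (μ : 𝕜) (k : ℕ) :
    dyadicWeight μ (2 * k + 1) = μ * dyadicWeight μ k := by
  rw [dyadicWeight, add_comm, Nat.digits_add 2 one_lt_two 1 k one_lt_two (Or.inl one_ne_zero),
    List.sum_cons, pow_add, pow_one, dyadicWeight]

lemma norm_dyadicWeight_le_one {μ : 𝕜} (hμ : ‖μ‖ ≤ 1) (k : ℕ) : ‖dyadicWeight μ k‖ ≤ 1 := by
  rw [dyadicWeight, norm_pow]
  exact pow_le_one₀ (norm_nonneg _) hμ

lemma norm_dyadicWeight_mul_le {μ : 𝕜} (hμ : ‖μ‖ ≤ 1) (k : ℕ) (z : 𝕜) :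
    ‖dyadicWeight μ k * z‖ ≤ ‖z‖ := by
  rw [norm_mul]
  exact mul_le_of_le_one_left (norm_nonneg _) (norm_dyadicWeight_le_one hμ k)

end DyadicWeight

lemma eq_zero_of_bounded_of_add_smul_shift_eq_zero {𝕜 E : Type*} [NormedField 𝕜]
    [NormedAddCommGroup E] [NormedSpace 𝕜 E] {μ : 𝕜} (hμ : ‖μ‖ < 1) {u : ℤ → E} {C : ℝ}
    (hC : ∀ m, ‖u m‖ ≤ C) {d : ℤ} (hu : ∀ m, u m + μ • u (m + d) = 0) (m : ℤ) : u m = 0 := by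
  have decay : ∀ n : ℕ, ∀ m, ‖u m‖ ≤ ‖μ‖ ^ n * C := by
    intro n
    induction n with
    | zero => simpa using hC
    | succ n ih =>
      intro m
      calc ‖u m‖ = ‖μ‖ * ‖u (m + d)‖ := by
            rw [eq_neg_of_add_eq_zero_left (hu m), norm_neg, norm_smul]
        _ ≤ ‖μ‖ * (‖μ‖ ^ n * C) := by gcongr; exact ih _
        _ = ‖μ‖ ^ (n + 1) * C := by ring
  have hlim : Tendsto (fun n : ℕ => ‖μ‖ ^ n * C) atTop (𝓝 0) := by
    simpa using (tendsto_pow_atTop_nhds_zero_of_lt_one (norm_nonneg _) hμ).mul_const C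
  exact norm_le_zero_iff.mp (ge_of_tendsto' hlim fun n => decay n m)

lemma injective_add_mul_natCast {d : ℕ} (hd : d ≠ 0) (m : ℤ) :
    Function.Injective fun k : ℕ => m + d * k :=
  fun a b hab => by simpa [hd] using hab

section DyadicPairing

variable {𝕜 : Type*} [NormedField 𝕜] {μ : 𝕜} {c : ℤ → 𝕜} {d : ℕ}

def dyadicPairing (μ : 𝕜) (c : ℤ → 𝕜) (d : ℕ) (m : ℤ) : 𝕜 :=
  ∑' k : ℕ, dyadicWeight μ k * c (m + d * k)

lemma norm_dyadicPairing_le (hμ : ‖μ‖ ≤ 1) (hc : Summable fun n => ‖c n‖) (hd : d ≠ 0)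
    (m : ℤ) : ‖dyadicPairing μ c d m‖ ≤ ∑' n, ‖c n‖ := by
  refine (tsum_of_norm_bounded
    (hc.comp_injective (injective_add_mul_natCast hd m)).hasSum fun k => ?_).trans
    (tsum_comp_le_tsum_of_inj hc (fun _ => norm_nonneg _) (injective_add_mul_natCast hd m))
  exact norm_dyadicWeight_mul_le hμ k _

variable [CompleteSpace 𝕜]

lemma summable_dyadicWeight_mul (hμ : ‖μ‖ ≤ 1) (hc : Summable fun n => ‖c n‖) (hd : d ≠ 0)
    (m : ℤ) : Summable fun k : ℕ => dyadicWeight μ k * c (m + d * k) :=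
  (hc.comp_injective (injective_add_mul_natCast hd m)).of_norm_bounded fun k =>
    norm_dyadicWeight_mul_le hμ k _

lemma dyadicPairing_eq_add (hμ : ‖μ‖ ≤ 1) (hc : Summable fun n => ‖c n‖) (hd : d ≠ 0)
    (m : ℤ) : dyadicPairing μ c d m =
      dyadicPairing μ c (2 * d) m + μ * dyadicPairing μ c (2 * d) (m + d) := by
  have hf := summable_dyadicWeight_mul hμ hc hd m
  rw [dyadicPairing, ← tsum_even_add_odd (f := fun k : ℕ => dyadicWeight μ k * c (m + d * k))
    (hf.comp_injective (mul_right_injective₀ two_ne_zero))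
    (hf.comp_injective ((add_left_injective 1).comp (mul_right_injective₀ two_ne_zero))),
    dyadicPairing, dyadicPairing, ← tsum_mul_left]
  congr 1 <;> refine tsum_congr fun k => ?_
  · rw [dyadicWeight_two_mul]
    congr 3
    push_cast
    ring
  · rw [dyadicWeight_two_mul_add_one, mul_assoc]
    congr 3
    push_cast
    ring

lemma dyadicPairing_two_mul_eq_zero (hμ : ‖μ‖ < 1) (hc : Summable fun n => ‖c n‖) (hd : d ≠ 0)
    (h : ∀ m, dyadicPairing μ c d m = 0) (m : ℤ) : dyadicPairing μ c (2 * d) m = 0 :=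
  eq_zero_of_bounded_of_add_smul_shift_eq_zero hμ
    (norm_dyadicPairing_le hμ.le hc (mul_ne_zero two_ne_zero hd)) (d := d)
    (fun m => by rw [smul_eq_mul, ← dyadicPairing_eq_add hμ.le hc hd, h]) m

lemma dyadicPairing_two_pow_eq_zero (hμ : ‖μ‖ < 1) (hc : Summable fun n => ‖c n‖)
    (h : ∀ m, dyadicPairing μ c 1 m = 0) (N : ℕ) (m : ℤ) : dyadicPairing μ c (2 ^ N) m = 0 := by
  induction N generalizing m with
  | zero => exact h m
  | succ N ih =>
    rw [pow_succ']
    exact dyadicPairing_two_mul_eq_zero hμ hc (pow_ne_zero N two_ne_zero) ih m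

lemma norm_sub_dyadicPairing_le (hμ : ‖μ‖ ≤ 1) (hc : Summable fun n => ‖c n‖) (hd : d ≠ 0)
    (m : ℤ) : ‖c m - dyadicPairing μ c d m‖ ≤ ∑' k : ℕ, ‖c (m + (k + d : ℕ))‖ := by
  have htail : Summable fun k : ℕ => ‖c (m + (k + d : ℕ))‖ :=
    hc.comp_injective fun a b hab => by simpa using hab
  rw [dyadicPairing, (summable_dyadicWeight_mul hμ hc hd m).tsum_eq_zero_add]
  simp only [dyadicWeight_zero, CharP.cast_eq_zero, mul_zero, add_zero, one_mul,
    sub_add_cancel_left, norm_neg]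
  have hstride : Function.Injective fun k : ℕ => d * k := mul_right_injective₀ hd
  refine (tsum_of_norm_bounded (htail.comp_injective hstride).hasSum fun k => ?_).trans
    (tsum_comp_le_tsum_of_inj htail (fun _ => norm_nonneg _) hstride)
  refine (norm_dyadicWeight_mul_le hμ _ _).trans_eq ?_
  simp only [Function.comp_apply]
  congr 2

lemma eq_zero_of_forall_dyadicPairing_eq_zero (hμ : ‖μ‖ < 1) (hc : Summable fun n => ‖c n‖)
    (h : ∀ m, dyadicPairing μ c 1 m = 0) : c = 0 := by
  funext m
  have bound (N : ℕ) : ‖c m‖ ≤ ∑' k : ℕ, ‖c (m + (k + 2 ^ N : ℕ))‖ := by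
    simpa [dyadicPairing_two_pow_eq_zero hμ hc h N m] using
      norm_sub_dyadicPairing_le hμ.le hc (pow_ne_zero N two_ne_zero) m
  have tail : Tendsto (fun N : ℕ => ∑' k : ℕ, ‖c (m + (k + 2 ^ N : ℕ))‖) atTop (𝓝 0) :=
    (tendsto_sum_nat_add fun k : ℕ => ‖c (m + k)‖).comp
      (tendsto_pow_atTop_atTop_of_one_lt one_lt_two)
  exact norm_le_zero_iff.mp (ge_of_tendsto' tail bound)

end DyadicPairing

lemma tsum_x0Fun_sub_mul (lam : ℂ) (c : ℤ → ℂ) (m : ℤ) :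
    ∑' n : ℤ, x0Fun lam (n - m) * c n = dyadicPairing lam⁻¹ c 1 m := by
  rw [dyadicPairing, ← (add_right_injective m).comp Nat.cast_injective |>.tsum_eq]
  · refine tsum_congr fun k => ?_
    simp [x0Fun, binOnes, dyadicWeight]
  · intro n hn
    have hmn : m ≤ n := by
      simp only [Function.mem_support, x0Fun, sub_nonneg] at hn
      by_contra hnm
      simp [hnm] at hn
    exact ⟨(n - m).toNat, by simp; omega⟩

/-- The canonical map `ι_{F^{(λ)}} : ℓ₁(ℤ) → (F^{(λ)})*` is injective:
if `∑_n x(n) a(n) = 0` for all `x ∈ F^{(λ)}`, then `a = 0`. -/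
theorem statement_5 (lam : ℂ) (h : 1 < ‖lam‖) (a : ellOne)
    (ha : ∀ x : ellInf, x ∈ Flam lam h → ∑' n : ℤ, x n * a n = 0) : a = 0 := by
  have hμ : ‖lam⁻¹‖ < 1 := by
    rw [norm_inv]
    exact inv_lt_one_of_one_lt₀ h
  have ha_summable : Summable fun n => ‖a n‖ := by
    simpa using (lp.memℓp a).summable (by norm_num)
  have hpairing (m : ℤ) : dyadicPairing lam⁻¹ a 1 m = 0 := by
    rw [← tsum_x0Fun_sub_mul]
    exact ha (zshift m (x0L lam h))
      (Submodule.le_topologicalClosure _ (Submodule.subset_span ⟨m, rfl⟩))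
  exact lp.ext (eq_zero_of_forall_dyadicPairing_eq_zero hμ ha_summable hpairing)
end
end

section
/- The sets X_t^{(k)} (for t ∈ ℤ and k ≥ 1) are pairwise disjoint: if X_s^{(k)} ∩ X_t^{(l)} ≠ ∅ for s, t ∈ ℤ and k, l ≥ 1, then s = t and k = l. -/
open scoped ENNReal
open Filter Topology

noncomputable section

/-- `U` is a free (non-principal) ultrafilter on `ℤ`. -/
def FreeUF (U : Ultrafilter ℤ) : Prop := ∀ z : ℤ, ({z} : Set ℤ) ∉ U

/-- the set `{2^{n₁} + ⋯ + 2^{n_k} + t : m < n₁ < n₂ < ⋯ < n_k}` (encoded by the `k`-element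
set `{n₁, …, n_k}` of exponents, all `> m`). -/
def binSet (t : ℤ) (k m : ℕ) : Set ℤ :=
  {z | ∃ s : Finset ℕ, s.card = k ∧ (∀ i ∈ s, m < i) ∧ z = (∑ i ∈ s, (2 : ℤ) ^ i) + t}

/-- the set `X_t^{(k)}` of free ultrafilters `U` on `ℤ` such that for every `m > 0` the set
`{2^{n₁} + ⋯ + 2^{n_k} + t : m < n₁ < ⋯ < n_k}` belongs to `U`. -/
def Xtk (t : ℤ) (k : ℕ) : Set (Ultrafilter ℤ) :=
  {U | FreeUF U ∧ ∀ m : ℕ, 0 < m → binSet t k m ∈ U}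

/-!
If `U` lies in `X_s^{(k)} ∩ X_t^{(l)}`, then for every `m` some integer is both `∑_{i ∈ A} 2^i + s`
and `∑_{i ∈ B} 2^i + t` with all exponents `> m`, so `2^(m+1) ∣ t - s`; taking `m > |t - s|` gives
`s = t`. Then `∑_{i ∈ A} 2^i = ∑_{i ∈ B} 2^i`, and uniqueness of binary expansions gives `A = B`,
hence `k = l`.
-/

theorem pow_succ_dvd_sum_pow {R : Type*} [CommSemiring R] (a : R) {m : ℕ} {A : Finset ℕ}
    (hA : ∀ i ∈ A, m < i) : a ^ (m + 1) ∣ ∑ i ∈ A, a ^ i :=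
  Finset.dvd_sum fun i hi => pow_dvd_pow a (hA i hi)

theorem two_pow_succ_dvd_sub_of_mem_binSet {z s t : ℤ} {k l m : ℕ}
    (hs : z ∈ binSet s k m) (ht : z ∈ binSet t l m) : (2 : ℤ) ^ (m + 1) ∣ t - s := by
  obtain ⟨A, -, hA, rfl⟩ := hs
  obtain ⟨B, -, hB, hAB⟩ := ht
  have hts : t - s = ∑ i ∈ A, (2 : ℤ) ^ i - ∑ i ∈ B, (2 : ℤ) ^ i := by linarith
  rw [hts]
  exact dvd_sub (pow_succ_dvd_sum_pow 2 hA) (pow_succ_dvd_sum_pow 2 hB)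

theorem eq_of_forall_binSet_inter_nonempty {s t : ℤ} {k l : ℕ}
    (h : ∀ m : ℕ, 0 < m → (binSet s k m ∩ binSet t l m).Nonempty) : s = t := by
  set m := (t - s).natAbs + 1
  obtain ⟨z, hzs, hzt⟩ := h m (Nat.succ_pos _)
  have hlt : |t - s| < (2 : ℤ) ^ (m + 1) := by
    rw [Int.abs_eq_natAbs]
    exact_mod_cast (Nat.lt_succ_self _).trans <| m.lt_two_pow_self.trans <|
      Nat.pow_lt_pow_succ one_lt_two
  have := Int.eq_zero_of_abs_lt_dvd (two_pow_succ_dvd_sub_of_mem_binSet hzs hzt) hlt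
  linarith

theorem card_eq_of_mem_binSet {z t : ℤ} {k l m m' : ℕ}
    (hk : z ∈ binSet t k m) (hl : z ∈ binSet t l m') : k = l := by
  obtain ⟨A, rfl, -, rfl⟩ := hk
  obtain ⟨B, rfl, -, hAB⟩ := hl
  have hsum : ∑ i ∈ A, 2 ^ i = ∑ i ∈ B, 2 ^ i := by
    have : ∑ i ∈ A, (2 : ℤ) ^ i = ∑ i ∈ B, (2 : ℤ) ^ i := by linarith
    exact_mod_cast this
  rw [Finset.geomSum_injective le_rfl hsum]

theorem statement_6_general (s t : ℤ) (k l : ℕ)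
    (h : (Xtk s k ∩ Xtk t l).Nonempty) : s = t ∧ k = l := by
  obtain ⟨U, ⟨-, hs⟩, ⟨-, ht⟩⟩ := h
  have hmeet : ∀ m : ℕ, 0 < m → (binSet s k m ∩ binSet t l m).Nonempty := fun m hm =>
    Ultrafilter.nonempty_of_mem (inter_mem (hs m hm) (ht m hm))
  obtain rfl := eq_of_forall_binSet_inter_nonempty hmeet
  obtain ⟨z, hzk, hzl⟩ := hmeet 1 one_pos
  exact ⟨rfl, card_eq_of_mem_binSet hzk hzl⟩

/-- Statement 6.  The sets `X_t^{(k)}` (`t ∈ ℤ`, `k ≥ 1`) are pairwise disjoint: if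
`X_s^{(k)} ∩ X_t^{(l)} ≠ ∅` then `s = t` and `k = l`. -/
theorem statement_6 (s t : ℤ) (k l : ℕ) (hk : 1 ≤ k) (hl : 1 ≤ l)
    (h : (Xtk s k ∩ Xtk t l).Nonempty) : s = t ∧ k = l :=
  statement_6_general s t k l h
end
end
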